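/- arXiv:1810.02686 — 3 statements merged into one kernel-verified Lean document; each statement's English description precedes it below -/
import Mathlib

section
/- Let X be a compact Hausdorff space, u ≠ v points of X, and let 𝒜 be a unital subalgebra of C(X,ℝ) that separates points. If a, b are distinct real numbers, then 𝒜_{u,v}^{a,b} = {f ∈ 𝒜 : f(u) = a, f(v) = b} is dense in C_{u,v}^{a,b} = {f ∈ C(X,ℝ) : f(u) = a, f(v) = b} with respect to the sup norm. -/
/-!
Pick `p ∈ A` with `p u = 1` and `p v = 0`. The correction
`g ↦ g + (f u - g u) • p + (f v - g v) • (1 - p)` is continuous, maps `A` into the functions of `A`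
agreeing with `f` at `u` and `v`, and fixes `f`. Hence it carries the density of `A`
(Stone–Weierstrass) over to the constrained subset.
-/

namespace Subalgebra.SeparatesPoints

variable {X 𝕜 : Type*} [TopologicalSpace X] [Field 𝕜] [TopologicalSpace 𝕜] [IsTopologicalRing 𝕜]
  {A : Subalgebra 𝕜 C(X, 𝕜)} {u v : X}

theorem exists_mem_apply_eq_one_apply_eq_zero (hA : A.SeparatesPoints) (huv : u ≠ v) :
    ∃ p ∈ A, p u = 1 ∧ p v = 0 := by
  obtain ⟨_, ⟨h, hhA, rfl⟩, hne⟩ := hA huv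
  refine ⟨(h u - h v)⁻¹ • (h - algebraMap 𝕜 C(X, 𝕜) (h v)),
    A.smul_mem (A.sub_mem hhA (A.algebraMap_mem _)) _, ?_, by simp⟩
  simp [inv_mul_cancel₀ (sub_ne_zero.mpr hne)]

theorem mem_closure_setOf_mem_apply_eq_apply (hA : A.SeparatesPoints) (huv : u ≠ v)
    {f : C(X, 𝕜)} (hf : f ∈ closure (A : Set C(X, 𝕜))) :
    f ∈ closure {g | g ∈ A ∧ g u = f u ∧ g v = f v} := by
  obtain ⟨p, hpA, hpu, hpv⟩ := hA.exists_mem_apply_eq_one_apply_eq_zero huv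
  let correct : C(X, 𝕜) → C(X, 𝕜) := fun g => g + (f u - g u) • p + (f v - g v) • (1 - p)
  have h_cont : Continuous correct := by fun_prop
  have h_fix : correct f = f := by simp [correct]
  have h_maps : Set.MapsTo correct A {g | g ∈ A ∧ g u = f u ∧ g v = f v} := fun g hg =>
    ⟨A.add_mem (A.add_mem hg (A.smul_mem hpA _)) (A.smul_mem (A.sub_mem A.one_mem hpA) _),
      by simp [correct, hpu], by simp [correct, hpv]⟩
  simpa only [h_fix] using map_mem_closure h_cont hf h_maps

end Subalgebra.SeparatesPoints

theorem stmt9_general (X : Type*) [TopologicalSpace X] [CompactSpace X] [T2Space X]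
    (u v : X) (huv : u ≠ v) (A : Subalgebra ℝ C(X, ℝ)) (hA : A.SeparatesPoints)
    (a b : ℝ) :
    {f : C(X, ℝ) | f u = a ∧ f v = b} ⊆
      closure {f : C(X, ℝ) | f ∈ A ∧ f u = a ∧ f v = b} := by
  rintro f ⟨rfl, rfl⟩
  apply hA.mem_closure_setOf_mem_apply_eq_apply huv
  rw [← Subalgebra.topologicalClosure_coe,
    ContinuousMap.subalgebra_topologicalClosure_eq_top_of_separatesPoints A hA]
  exact Algebra.mem_top

theorem stmt9 (X : Type*) [TopologicalSpace X] [CompactSpace X] [T2Space X]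
    (u v : X) (huv : u ≠ v) (A : Subalgebra ℝ C(X, ℝ)) (hA : A.SeparatesPoints)
    (a b : ℝ) (hab : a ≠ b) :
    {f : C(X, ℝ) | f u = a ∧ f v = b} ⊆
      closure {f : C(X, ℝ) | f ∈ A ∧ f u = a ∧ f v = b} :=
  stmt9_general X u v huv A hA a b
end

section
/- Let X be a compact Hausdorff space, let x₁,...,x_k be distinct points of X and v₁,...,v_k ∈ ℝ. If 𝒜 is a unital subalgebra of C(X,ℝ) separating points, then {f ∈ 𝒜 : f(x_i) = v_i for all i} is dense in {f ∈ C(X,ℝ) : f(x_i) = v_i for all i} in the sup norm. -/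
/-!
Separation of points yields, for each `i`, a product of affine functions in `𝒜` equal to `1` at
`xᵢ` and `0` at the other `xⱼ`. With such a Lagrange basis `eᵢ`, the map
`g ↦ g + ∑ᵢ (vᵢ - g xᵢ) • eᵢ` is continuous, sends `𝒜` into the constrained part of `𝒜`, and fixes
every function satisfying the constraints; so it carries the density of `𝒜` given by
Stone–Weierstrass over to the constrained sets.
-/

open Finset

section

variable {X 𝕜 ι : Type*} [TopologicalSpace X] [Fintype ι] [DecidableEq ι]

theorem Subalgebra.SeparatesPoints.exists_lagrange_basis [Field 𝕜] [TopologicalSpace 𝕜]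
    [IsTopologicalRing 𝕜] {A : Subalgebra 𝕜 C(X, 𝕜)} (hA : A.SeparatesPoints) {x : ι → X}
    (hx : Function.Injective x) :
    ∃ e : ι → C(X, 𝕜), (∀ i, e i ∈ A) ∧ ∀ i j, e i (x j) = if i = j then 1 else 0 := by
  classical
  have bump (i j : ι) : ∃ g ∈ A, g (x i) = 1 ∧ (i ≠ j → g (x j) = 0) := by
    obtain ⟨g, hgA, hgi, hgj⟩ := hA.strongly (fun z => if z = x i then 1 else 0) (x i) (x j)
    exact ⟨g, hgA, by simpa using hgi, fun hij => by simpa [hx.ne hij.symm] using hgj⟩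
  choose g hgA hgi hgj using bump
  refine ⟨fun i => ∏ j ∈ univ.erase i, g i j, fun i => prod_mem fun j _ => hgA i j, fun i j => ?_⟩
  split_ifs with hij
  · subst hij
    simp [ContinuousMap.prod_apply, hgi]
  · rw [ContinuousMap.prod_apply]
    exact prod_eq_zero (mem_erase.2 ⟨Ne.symm hij, mem_univ j⟩) (hgj i j hij)

theorem ContinuousMap.mem_closure_setOf_mem_and_interpolates [Ring 𝕜] [TopologicalSpace 𝕜]
    [IsTopologicalRing 𝕜] {S : Submodule 𝕜 C(X, 𝕜)} {x : ι → X} {e : ι → C(X, 𝕜)}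
    (heS : ∀ i, e i ∈ S) (hex : ∀ i j, e i (x j) = if i = j then 1 else 0) {v : ι → 𝕜}
    {f : C(X, 𝕜)} (hf : f ∈ closure (S : Set C(X, 𝕜))) (hfv : ∀ i, f (x i) = v i) :
    f ∈ closure {g : C(X, 𝕜) | g ∈ S ∧ ∀ i, g (x i) = v i} := by
  set correct : C(X, 𝕜) → C(X, 𝕜) := fun g => g + ∑ i, (v i - g (x i)) • e i
  have correct_apply (g : C(X, 𝕜)) (j : ι) : correct g (x j) = v j := by simp [correct, hex]
  have correct_fix : correct f = f := by simp [correct, hfv]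
  have correct_continuous : Continuous correct := by fun_prop
  rw [← correct_fix]
  exact map_mem_closure correct_continuous hf fun g hg =>
    ⟨S.add_mem hg (S.sum_mem fun i _ => S.smul_mem _ (heS i)), correct_apply g⟩

end

theorem stmt11_general (X : Type*) [TopologicalSpace X] [CompactSpace X]
    (A : Subalgebra ℝ C(X, ℝ)) (hA : A.SeparatesPoints)
    (k : ℕ) (x : Fin k → X) (hx : Function.Injective x) (v : Fin k → ℝ) :
    {f : C(X, ℝ) | ∀ i, f (x i) = v i} ⊆
      closure {f : C(X, ℝ) | f ∈ A ∧ ∀ i, f (x i) = v i} := by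
  obtain ⟨e, heA, hex⟩ := hA.exists_lagrange_basis hx
  intro f hfv
  have hf : f ∈ closure (A : Set C(X, ℝ)) := by
    rw [← A.topologicalClosure_coe]
    exact ContinuousMap.continuousMap_mem_subalgebra_closure_of_separatesPoints A hA f
  exact ContinuousMap.mem_closure_setOf_mem_and_interpolates (S := Subalgebra.toSubmodule A)
    heA hex hf hfv

theorem stmt11 (X : Type*) [TopologicalSpace X] [CompactSpace X] [T2Space X]
    (A : Subalgebra ℝ C(X, ℝ)) (hA : A.SeparatesPoints)
    (k : ℕ) (x : Fin k → X) (hx : Function.Injective x) (v : Fin k → ℝ) :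
    {f : C(X, ℝ) | ∀ i, f (x i) = v i} ⊆
      closure {f : C(X, ℝ) | f ∈ A ∧ ∀ i, f (x i) = v i} :=
  stmt11_general X A hA k x hx v
end

section
/- Fix q ∈ S¹ with lift q̃ ∈ [0,1) (p(q̃) = q) and m ∈ ℤ. The set PL_m^q(S¹,S¹) of continuous f : S¹ → S¹ whose lift f̃_α is piecewise linear with f̃_α(0) = q̃ and f̃_α(1) = q̃ + m is dense, in the metric d₀, in C_m^q(S¹,S¹) = {f ∈ C(S¹,S¹) : f((1,0)) = q and W(f) = m}. -/
/-!
The lift `u = L f` runs from `q̃` to `q̃ + m`. Interpolating `u` linearly on a fine uniform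
partition of `[0,1]` gives, by uniform continuity, a piecewise linear `F` uniformly close to `u`
with the same endpoints. Since `F 1 - F 0 = m` is an integer, `p ∘ F` closes up to a continuous
self-map `g` of the circle with `g ∘ α = p ∘ F`; `F` and `L g` are then two lifts of `g ∘ α`
starting in `[0,1)`, so they agree by uniqueness of lifts along the covering `p`.
-/
open Real unitInterval

/-- The exponential covering map `p(t) = (cos 2πt, sin 2πt)`, with the unit circle
realized as the unit circle `Circle` in `ℂ`. -/
noncomputable def p (t : ℝ) : Circle := Circle.exp (2 * π * t)

/-- The loop `α : [0,1] → S¹`, `α(t) = (cos 2πt, sin 2πt)`. -/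
noncomputable def α (t : unitInterval) : Circle := p t

/-- A continuous function on `[0,1]` is piecewise linear if there is a partition
`0 = p₀ < p₁ < ... < p_k = 1` on each piece of which it is given by the affine
interpolation formula. -/
def IsPL (f : C(unitInterval, ℝ)) : Prop :=
  ∃ k : ℕ, ∃ P : Fin (k + 1) → ℝ, ∃ Q : Fin (k + 1) → ℝ,
    StrictMono P ∧ P 0 = 0 ∧ P (Fin.last k) = 1 ∧
      ∀ i : Fin k, ∀ t : unitInterval, (t : ℝ) ∈ Set.Icc (P i.castSucc) (P i.succ) →
        f t = Q i.castSucc +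
          (Q i.succ - Q i.castSucc) * ((t : ℝ) - P i.castSucc) / (P i.succ - P i.castSucc)

lemma p_add_intCast (x : ℝ) (n : ℤ) : p (x + n) = p x := by
  rw [p, p, mul_add, Circle.exp_add, Circle.exp_two_pi_mul_int, mul_one]

lemma α_zero : α 0 = 1 := by
  simp [α, p]

lemma injOn_p_Ico : Set.InjOn p (Set.Ico 0 1) := by
  intro x hx y hy h
  have h2π : (0 : ℝ) < 2 * π := by positivity
  refine mul_left_cancel₀ h2π.ne' (Circle.exp_injOn_Ico (by simp : 2 * π - 0 ≤ 2 * π) ?_ ?_ h)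
  · exact ⟨by nlinarith [hx.1], by nlinarith [hx.2]⟩
  · exact ⟨by nlinarith [hy.1], by nlinarith [hy.2]⟩

lemma isCoveringMap_p : IsCoveringMap p :=
  Circle.isCoveringMap_exp.comp_homeomorph (Homeomorph.mulLeft₀ (2 * π) (by positivity))

lemma homeomorphCircle_coe_eq_p (x : ℝ) :
    AddCircle.homeomorphCircle one_ne_zero (x : AddCircle (1 : ℝ)) = p x := by
  simp [AddCircle.homeomorphCircle_apply, AddCircle.toCircle_apply_mk, p]

lemma exists_comp_α_eq (F : C(I, ℝ)) (h : p (F 0) = p (F 1)) :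
    ∃ g : C(Circle, Circle), ∀ t, g (α t) = p (F t) := by
  let e := AddCircle.homeomorphCircle (T := 1) one_ne_zero
  have hG : Continuous (AddCircle.liftIco (1 : ℝ) 0 (p ∘ F.IccExtend zero_le_one)) :=
    AddCircle.liftIco_continuous (by simpa using h) (by fun_prop [p])
  refine ⟨⟨_ ∘ e.symm, hG.comp e.symm.continuous⟩, fun t => ?_⟩
  simp only [ContinuousMap.coe_mk, Function.comp_apply, α]
  rw [← homeomorphCircle_coe_eq_p, e.symm_apply_apply]
  rcases t.2.2.lt_or_eq with ht | ht
  · rw [AddCircle.liftIco_coe_apply (p := (1 : ℝ)) (a := 0) ⟨t.2.1, by simpa using ht⟩]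
    simp
  · obtain rfl : t = 1 := Subtype.ext ht
    rw [Set.Icc.coe_one, AddCircle.coe_period, ← QuotientAddGroup.mk_zero,
      AddCircle.liftIco_coe_apply (p := (1 : ℝ)) (a := 0) (by simp)]
    simpa using h

section pwLinearInterp

open Finset

/-- The summand for `j` is a ramp rising from `0` to `1` on `[j/K, (j+1)/K]`, so the sum is the
piecewise linear function through the points `(j/K, y j)`. -/
noncomputable def pwLinearInterp (K : ℕ) (y : ℕ → ℝ) : C(ℝ, ℝ) :=
  ⟨fun x => y 0 + ∑ j ∈ range K, (y (j + 1) - y j) * max 0 (min 1 (K * x - j)), by fun_prop⟩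

variable {K : ℕ} {y : ℕ → ℝ} {x : ℝ}

lemma pwLinearInterp_apply_of_mem {i : ℕ} (hi : i < K) (h₁ : i ≤ K * x) (h₂ : K * x ≤ i + 1) :
    pwLinearInterp K y x = y i + (y (i + 1) - y i) * (K * x - i) := by
  have hsplit := sum_range_add_sum_Ico (fun j => (y (j + 1) - y j) * max 0 (min 1 (K * x - j)))
    (Nat.succ_le_of_lt hi)
  have hbelow : ∀ j ∈ range i,
      (y (j + 1) - y j) * max 0 (min 1 (K * x - j)) = y (j + 1) - y j := by
    intro j hj
    have : (j : ℝ) + 1 ≤ i := by exact_mod_cast mem_range.mp hj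
    rw [min_eq_left (by linarith), max_eq_right zero_le_one, mul_one]
  have habove : ∀ j ∈ Ico (i + 1) K, (y (j + 1) - y j) * max 0 (min 1 (K * x - j)) = 0 := by
    intro j hj
    have : (i : ℝ) + 1 ≤ j := by exact_mod_cast (mem_Ico.mp hj).1
    rw [max_eq_left (min_le_of_right_le (by linarith)), mul_zero]
  simp only [pwLinearInterp, ContinuousMap.coe_mk, ← hsplit, sum_range_succ, sum_congr rfl hbelow,
    sum_congr rfl habove, sum_range_sub, sum_const_zero, add_zero]
  rw [min_eq_right (by linarith), max_eq_right (by linarith)]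
  ring

lemma pwLinearInterp_zero : pwLinearInterp K y 0 = y 0 := by
  simp [pwLinearInterp]

lemma pwLinearInterp_one : pwLinearInterp K y 1 = y K := by
  have hramp : ∀ j ∈ range K, (y (j + 1) - y j) * max 0 (min 1 (K * 1 - j : ℝ)) =
      y (j + 1) - y j := by
    intro j hj
    have : (j : ℝ) + 1 ≤ K := by exact_mod_cast mem_range.mp hj
    rw [min_eq_left (by linarith), max_eq_right zero_le_one, mul_one]
  simp only [pwLinearInterp, ContinuousMap.coe_mk, sum_congr rfl hramp, sum_range_sub]
  ring

lemma exists_lt_le_mul_le (hK : 0 < K) (hx : x ∈ Set.Icc 0 1) :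
    ∃ i < K, (i : ℝ) ≤ K * x ∧ K * x ≤ i + 1 := by
  have hKx : 0 ≤ K * x := mul_nonneg K.cast_nonneg hx.1
  rcases lt_or_ge ⌊K * x⌋₊ K with hlt | hge
  · exact ⟨_, hlt, Nat.floor_le hKx, (Nat.lt_floor_add_one _).le⟩
  · have hKx' : (K : ℝ) ≤ K * x := (Nat.le_floor_iff hKx).mp hge
    refine ⟨K - 1, Nat.sub_lt hK one_pos, ?_, ?_⟩ <;> rw [Nat.cast_pred hK]
    · linarith
    · linarith [mul_le_of_le_one_right K.cast_nonneg hx.2]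

lemma isPL_restrict_pwLinearInterp (hK : 0 < K) (y : ℕ → ℝ) :
    IsPL ((pwLinearInterp K y).restrict I) := by
  have hK' : (0 : ℝ) < K := by exact_mod_cast hK
  refine ⟨K, fun i => (i : ℝ) / K, fun i => y i, fun i j hij => ?_, by simp, by simp [hK'.ne'],
    fun i t ht => ?_⟩
  · exact div_lt_div_of_pos_right (by exact_mod_cast hij) hK'
  · simp only [Fin.val_castSucc, Fin.val_succ, Nat.cast_add, Nat.cast_one, Set.mem_Icc,
      div_le_iff₀ hK', le_div_iff₀ hK'] at ht ⊢
    rw [ContinuousMap.restrict_apply,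
      pwLinearInterp_apply_of_mem i.isLt (by linarith) (by linarith)]
    field_simp
    ring

lemma abs_pwLinearInterp_sub_le (hK : 0 < K) (hx : x ∈ Set.Icc 0 1) {c η : ℝ}
    (hy : ∀ j : ℕ, |(j : ℝ) - K * x| ≤ 1 → |y j - c| ≤ η) :
    |pwLinearInterp K y x - c| ≤ η := by
  obtain ⟨i, hi, h₁, h₂⟩ := exists_lt_le_mul_le hK hx
  have hmem : ∀ j : ℕ, |(j : ℝ) - K * x| ≤ 1 → y j ∈ Metric.closedBall c η :=
    fun j hj => by rw [Metric.mem_closedBall, Real.dist_eq]; exact hy j hj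
  have := (convex_closedBall c η).add_smul_sub_mem
    (hmem i (by rw [abs_le]; constructor <;> linarith))
    (hmem (i + 1) (by push_cast; rw [abs_le]; constructor <;> linarith))
    (t := K * x - i) ⟨by linarith, by linarith⟩
  rwa [Metric.mem_closedBall, Real.dist_eq, smul_eq_mul, mul_comm,
    ← pwLinearInterp_apply_of_mem hi h₁ h₂] at this

end pwLinearInterp

theorem exists_isPL_abs_sub_le (u : C(I, ℝ)) {η : ℝ} (hη : 0 < η) :
    ∃ F : C(I, ℝ), IsPL F ∧ F 0 = u 0 ∧ F 1 = u 1 ∧ ∀ t, |F t - u t| ≤ η := by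
  obtain ⟨δ, hδ, hu⟩ := Metric.uniformContinuous_iff.mp
    (CompactSpace.uniformContinuous_of_continuous u.continuous) η hη
  obtain ⟨K, hK, hKδ⟩ : ∃ K : ℕ, 0 < K ∧ 1 / (K : ℝ) < δ :=
    have ⟨n, hn⟩ := exists_nat_one_div_lt hδ; ⟨n + 1, n.succ_pos, by exact_mod_cast hn⟩
  have hK' : (0 : ℝ) < K := by exact_mod_cast hK
  let node (j : ℕ) : I := Set.projIcc 0 1 zero_le_one (j / K)
  refine ⟨(pwLinearInterp K (u ∘ node)).restrict I, isPL_restrict_pwLinearInterp hK _,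
    ?_, ?_, fun t => abs_pwLinearInterp_sub_le hK t.2 fun j hj => ?_⟩
  · simp [pwLinearInterp_zero, node]
  · simp [pwLinearInterp_one, node, hK'.ne']
  · rw [← Real.dist_eq]
    refine (hu ?_).le
    calc dist (node j) t = |(node j : ℝ) - Set.projIcc 0 1 zero_le_one (t : ℝ)| := by
          rw [Set.projIcc_val, Subtype.dist_eq, Real.dist_eq]
      _ ≤ |(j : ℝ) / K - t| := Set.abs_projIcc_sub_projIcc _
      _ = |(j : ℝ) - K * t| / K := by
          rw [← abs_of_pos hK', ← abs_div, abs_of_pos hK']; congr 1; field_simp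
      _ ≤ 1 / K := by gcongr
      _ < δ := hKδ

theorem stmt14 (L : C(Circle, Circle) → C(unitInterval, ℝ))
    (hlift : ∀ f, ∀ t, p (L f t) = f (α t))
    (hL0 : ∀ f, L f 0 ∈ Set.Ico (0 : ℝ) 1)
    (q : Circle) (qt : ℝ) (hqt : qt ∈ Set.Ico (0 : ℝ) 1) (hpq : p qt = q) (m : ℤ)
    (f : C(Circle, Circle)) (hfq : f 1 = q) (hW : L f 1 - L f 0 = m)
    (ε : ℝ) (hε : 0 < ε) :
    ∃ g : C(Circle, Circle), g 1 = q ∧ L g 1 - L g 0 = m ∧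
      IsPL (L g) ∧ L g 0 = qt ∧ L g 1 = qt + m ∧
      2 * π * ⨆ t, |L f t - L g t| < ε := by
  have hf0 : L f 0 = qt := injOn_p_Ico (hL0 f) hqt (by rw [hlift, α_zero, hfq, hpq])
  have hf1 : L f 1 = qt + m := by linarith
  obtain ⟨F, hPL, hF0, hF1, hFf⟩ :=
    exists_isPL_abs_sub_le (L f) (η := ε / (4 * π)) (by positivity)
  obtain ⟨g, hg⟩ := exists_comp_α_eq F (by rw [hF0, hF1, hf0, hf1, p_add_intCast])
  have hLg : L g = F := by
    refine DFunLike.coe_injective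
      (isCoveringMap_p.eq_of_comp_eq (L g).continuous F.continuous ?_ 0 ?_)
    · funext t
      simp [hlift, hg]
    · exact injOn_p_Ico (hL0 g) (by rw [hF0, hf0]; exact hqt) (by rw [hlift, hg])
  have hsup : ⨆ t, |L f t - L g t| ≤ ε / (4 * π) :=
    ciSup_le fun t => by rw [hLg, abs_sub_comm]; exact hFf t
  refine ⟨g, ?_, ?_, hLg ▸ hPL, ?_, ?_, ?_⟩
  · rw [← α_zero, hg, hF0, hf0, hpq]
  · rw [hLg, hF0, hF1, hf0, hf1]; ring
  · rw [hLg, hF0, hf0]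
  · rw [hLg, hF1, hf1]
  · calc 2 * π * ⨆ t, |L f t - L g t| ≤ 2 * π * (ε / (4 * π)) := by gcongr
      _ = ε / 2 := by field_simp; ring
      _ < ε := half_lt_self hε
end
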